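/- For every positive integer k, the class G_k is closed under gluing along a clique: if a graph G has a clique-cutset K with an associated cut-partition (A,B,K), and both induced subgraphs G[A ∪ K] and G[B ∪ K] belong to G_k, then G belongs to G_k. -/

import Mathlib

open SimpleGraph

namespace PaperSep

variable {V : Type} {W : Type}

/-- There is a walk from `a` to `b` in `G` all of whose vertices avoid the set `S`. -/
def ConnAvoid (G : SimpleGraph V) (S : Set V) (a b : V) : Prop :=
  ∃ p : G.Walk a b, ∀ v ∈ p.support, v ∉ S

/-- `S` is an `(a,b)`-separator of `G`. -/
def IsSep (G : SimpleGraph V) (a b : V) (S : Set V) : Prop :=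
  a ∉ S ∧ b ∉ S ∧ ¬ ConnAvoid G S a b

/-- `S` is a minimal `(a,b)`-separator of `G`. -/
def IsMinSep (G : SimpleGraph V) (a b : V) (S : Set V) : Prop :=
  IsSep G a b S ∧ ∀ T ⊂ S, ¬ IsSep G a b T

/-- `S` is a minimal separator of `G`. -/
def IsMinimalSeparator (G : SimpleGraph V) (S : Set V) : Prop :=
  ∃ a b : V, a ≠ b ∧ ¬ G.Adj a b ∧ IsMinSep G a b S

/-- `K` is a cutset of `G`, i.e. `G − K` is disconnected. -/
def IsCutset (G : SimpleGraph V) (K : Set V) : Prop :=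
  ∃ a b : V, a ∉ K ∧ b ∉ K ∧ ¬ ConnAvoid G K a b

/-- `K` is a minimal cutset of `G`. -/
def IsMinimalCutset (G : SimpleGraph V) (K : Set V) : Prop :=
  IsCutset G K ∧ ∀ T ⊂ K, ¬ IsCutset G T

/-- A class of finite graphs. -/
def GraphClass : Type 1 :=
  ∀ (α : Type) [Finite α], SimpleGraph α → Prop

/-- A class is hereditary if it is closed under isomorphism and induced subgraphs. -/
def Hereditary (C : GraphClass) : Prop :=
  ∀ (α : Type) [Finite α] (G : SimpleGraph α) (β : Type) [Finite β] (H : SimpleGraph β)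
    (s : Set α), Nonempty (H ≃g G.induce s) → C α G → C β H

/-- `G ∈ 𝒢_C` : every minimal separator of `G` induces a graph in `C`. -/
def MemGC (C : GraphClass) {α : Type} [Finite α] (G : SimpleGraph α) : Prop :=
  ∀ S : Set α, IsMinimalSeparator G S → C ↥S (G.induce S)

/-- The class `𝒢_C`. -/
def GCclass (C : GraphClass) : GraphClass :=
  fun α inst G => @MemGC C α inst G

/-- `S` is a union of `k` (possibly empty) cliques of `G`. -/
def UnionOfCliques (G : SimpleGraph V) (k : ℕ) (S : Set V) : Prop :=
  ∃ f : Fin k → Set V, (∀ i, G.IsClique (f i)) ∧ S = ⋃ i, f i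

/-- `G ∈ 𝒢_k` : every minimal separator of `G` is a union of `k` cliques. -/
def MemGk (k : ℕ) (G : SimpleGraph V) : Prop :=
  ∀ S : Set V, IsMinimalSeparator G S → UnionOfCliques G k S

/-- The class `𝒢_k`. -/
def Gkclass (k : ℕ) : GraphClass := fun _ _ G => MemGk k G

/-- The class `𝒞_k` of graphs whose vertex set is a union of `k` cliques. -/
def Ckclass (k : ℕ) : GraphClass := fun _ _ G => UnionOfCliques G k Set.univ

/-- An induced minor model of `H` in `G`. -/
def IsIMModel (G : SimpleGraph V) (H : SimpleGraph W) (X : W → Set V) : Prop :=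
  (∀ w, (X w).Nonempty) ∧
  (∀ u w : W, u ≠ w → Disjoint (X u) (X w)) ∧
  (∀ w, (G.induce (X w)).Connected) ∧
  (∀ u w : W, u ≠ w → (H.Adj u w ↔ ∃ a ∈ X u, ∃ b ∈ X w, G.Adj a b))

/-- `H` is an induced minor of `G`. -/
def IsInducedMinor (H : SimpleGraph W) (G : SimpleGraph V) : Prop :=
  ∃ X : W → Set V, IsIMModel G H X

/-- The class `C` is closed under induced minors. -/
def IMClosed (C : GraphClass) : Prop :=
  ∀ (α : Type) [Finite α] (G : SimpleGraph α) (β : Type) [Finite β] (H : SimpleGraph β),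
    C α G → IsInducedMinor H G → C β H

/-- The class `C` is closed under the addition of edges. -/
def EdgeAddClosed (C : GraphClass) : Prop :=
  ∀ (α : Type) [Finite α] (G : SimpleGraph α) (a b : α), a ≠ b → ¬ G.Adj a b →
    C α G → C α (G ⊔ SimpleGraph.edge a b)

/-- `G ∈ ℳ_C` : `G ∉ C` but every proper induced minor of `G` is in `C`.
(For finite graphs, the proper induced minors of `G` are exactly the induced minors of `G`
not isomorphic to `G`.) -/
def MemMC (C : GraphClass) {α : Type} [Finite α] (G : SimpleGraph α) : Prop :=
  ¬ C α G ∧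
  ∀ (β : Type) [Finite β] (H : SimpleGraph β),
    IsInducedMinor H G → IsEmpty (H ≃g G) → C β H

/-- The complete join of two graphs. -/
def join (G : SimpleGraph V) (H : SimpleGraph W) : SimpleGraph (V ⊕ W) :=
  SimpleGraph.fromRel (fun x y =>
    match x, y with
    | Sum.inl a, Sum.inl b => G.Adj a b
    | Sum.inr a, Sum.inr b => H.Adj a b
    | _, _ => True)

/-- The class `C` is closed under the addition of universal vertices (up to isomorphism). -/
def UnivAddClosed (C : GraphClass) : Prop :=
  ∀ (α : Type) [Finite α] (G : SimpleGraph α) (β : Type) [Finite β] (H : SimpleGraph β),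
    C α G → Nonempty (H ≃g join (⊥ : SimpleGraph (Fin 1)) G) → C β H

/-- `G` has a universal vertex. -/
def HasUniversalVertex (G : SimpleGraph V) : Prop :=
  ∃ v : V, ∀ w : V, w ≠ v → G.Adj v w



/-- `G` is a theta: two nonadjacent vertices joined by three internally disjoint induced
paths of length at least two, with no other vertices or edges
(equivalently, a subdivision of `K_{2,3}`). -/
def IsTheta (G : SimpleGraph V) : Prop :=
  ∃ (a b : V) (P₁ P₂ P₃ : G.Walk a b),
    a ≠ b ∧
    P₁.IsPath ∧ P₂.IsPath ∧ P₃.IsPath ∧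
    2 ≤ P₁.length ∧ 2 ≤ P₂.length ∧ 2 ≤ P₃.length ∧
    (∀ v : V, v ∈ P₁.support → v ∈ P₂.support → v = a ∨ v = b) ∧
    (∀ v : V, v ∈ P₁.support → v ∈ P₃.support → v = a ∨ v = b) ∧
    (∀ v : V, v ∈ P₂.support → v ∈ P₃.support → v = a ∨ v = b) ∧
    (∀ v : V, v ∈ P₁.support ∨ v ∈ P₂.support ∨ v ∈ P₃.support) ∧
    (∀ u v : V, G.Adj u v ↔
      s(u, v) ∈ P₁.edges ∨ s(u, v) ∈ P₂.edges ∨ s(u, v) ∈ P₃.edges)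

/-- `G` is a pyramid: an apex `a` joined to a triangle `b₁b₂b₃` by three paths sharing only
`a`, at least two of which have length at least two, with no other vertices or edges. -/
def IsPyramid (G : SimpleGraph V) : Prop :=
  ∃ (a b₁ b₂ b₃ : V) (P₁ : G.Walk a b₁) (P₂ : G.Walk a b₂) (P₃ : G.Walk a b₃),
    G.Adj b₁ b₂ ∧ G.Adj b₁ b₃ ∧ G.Adj b₂ b₃ ∧
    P₁.IsPath ∧ P₂.IsPath ∧ P₃.IsPath ∧
    1 ≤ P₁.length ∧ 1 ≤ P₂.length ∧ 1 ≤ P₃.length ∧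
    ((2 ≤ P₁.length ∧ 2 ≤ P₂.length) ∨ (2 ≤ P₁.length ∧ 2 ≤ P₃.length) ∨
      (2 ≤ P₂.length ∧ 2 ≤ P₃.length)) ∧
    (∀ v : V, v ∈ P₁.support → v ∈ P₂.support → v = a) ∧
    (∀ v : V, v ∈ P₁.support → v ∈ P₃.support → v = a) ∧
    (∀ v : V, v ∈ P₂.support → v ∈ P₃.support → v = a) ∧
    (∀ v : V, v ∈ P₁.support ∨ v ∈ P₂.support ∨ v ∈ P₃.support) ∧
    (∀ u v : V, G.Adj u v ↔
      s(u, v) ∈ P₁.edges ∨ s(u, v) ∈ P₂.edges ∨ s(u, v) ∈ P₃.edges ∨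
      s(u, v) = s(b₁, b₂) ∨ s(u, v) = s(b₁, b₃) ∨ s(u, v) = s(b₂, b₃))

/-- `G` is a prism: two disjoint triangles joined by three pairwise disjoint paths, with no
other vertices or edges. -/
def IsPrism (G : SimpleGraph V) : Prop :=
  ∃ (a₁ a₂ a₃ b₁ b₂ b₃ : V) (P₁ : G.Walk a₁ b₁) (P₂ : G.Walk a₂ b₂) (P₃ : G.Walk a₃ b₃),
    G.Adj a₁ a₂ ∧ G.Adj a₁ a₃ ∧ G.Adj a₂ a₃ ∧
    G.Adj b₁ b₂ ∧ G.Adj b₁ b₃ ∧ G.Adj b₂ b₃ ∧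
    P₁.IsPath ∧ P₂.IsPath ∧ P₃.IsPath ∧
    1 ≤ P₁.length ∧ 1 ≤ P₂.length ∧ 1 ≤ P₃.length ∧
    (∀ v : V, v ∈ P₁.support → v ∈ P₂.support → False) ∧
    (∀ v : V, v ∈ P₁.support → v ∈ P₃.support → False) ∧
    (∀ v : V, v ∈ P₂.support → v ∈ P₃.support → False) ∧
    (∀ v : V, v ∈ P₁.support ∨ v ∈ P₂.support ∨ v ∈ P₃.support) ∧
    (∀ u v : V, G.Adj u v ↔
      s(u, v) ∈ P₁.edges ∨ s(u, v) ∈ P₂.edges ∨ s(u, v) ∈ P₃.edges ∨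
      s(u, v) = s(a₁, a₂) ∨ s(u, v) = s(a₁, a₃) ∨ s(u, v) = s(a₂, a₃) ∨
      s(u, v) = s(b₁, b₂) ∨ s(u, v) = s(b₁, b₃) ∨ s(u, v) = s(b₂, b₃))

/-- `G` is a long prism: a prism other than the complement of `C₆`, i.e. a prism in which at
least one of the three paths has length at least two. -/
def IsLongPrism (G : SimpleGraph V) : Prop :=
  ∃ (a₁ a₂ a₃ b₁ b₂ b₃ : V) (P₁ : G.Walk a₁ b₁) (P₂ : G.Walk a₂ b₂) (P₃ : G.Walk a₃ b₃),
    G.Adj a₁ a₂ ∧ G.Adj a₁ a₃ ∧ G.Adj a₂ a₃ ∧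
    G.Adj b₁ b₂ ∧ G.Adj b₁ b₃ ∧ G.Adj b₂ b₃ ∧
    P₁.IsPath ∧ P₂.IsPath ∧ P₃.IsPath ∧
    1 ≤ P₁.length ∧ 1 ≤ P₂.length ∧ 1 ≤ P₃.length ∧
    (2 ≤ P₁.length ∨ 2 ≤ P₂.length ∨ 2 ≤ P₃.length) ∧
    (∀ v : V, v ∈ P₁.support → v ∈ P₂.support → False) ∧
    (∀ v : V, v ∈ P₁.support → v ∈ P₃.support → False) ∧
    (∀ v : V, v ∈ P₂.support → v ∈ P₃.support → False) ∧
    (∀ v : V, v ∈ P₁.support ∨ v ∈ P₂.support ∨ v ∈ P₃.support) ∧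
    (∀ u v : V, G.Adj u v ↔
      s(u, v) ∈ P₁.edges ∨ s(u, v) ∈ P₂.edges ∨ s(u, v) ∈ P₃.edges ∨
      s(u, v) = s(a₁, a₂) ∨ s(u, v) = s(a₁, a₃) ∨ s(u, v) = s(a₂, a₃) ∨
      s(u, v) = s(b₁, b₂) ∨ s(u, v) = s(b₁, b₃) ∨ s(u, v) = s(b₂, b₃))

/-- `G` is a wheel: a hole (chordless cycle of length at least four) together with one
additional vertex having at least three neighbors on the hole. -/
def IsWheel (G : SimpleGraph V) : Prop :=
  ∃ (v x : V) (c : G.Walk x x),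
    c.IsCycle ∧ 4 ≤ c.length ∧ v ∉ c.support ∧
    (∀ u : V, u = v ∨ u ∈ c.support) ∧
    (∀ u w : V, u ∈ c.support → w ∈ c.support → G.Adj u w → s(u, w) ∈ c.edges) ∧
    3 ≤ {u : V | u ∈ c.support ∧ G.Adj v u}.ncard

/-- `G` is a broken wheel: a wheel in which the neighbors of the additional vertex induce a
disconnected subgraph of the hole. -/
def IsBrokenWheel (G : SimpleGraph V) : Prop :=
  ∃ (v x : V) (c : G.Walk x x),
    c.IsCycle ∧ 4 ≤ c.length ∧ v ∉ c.support ∧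
    (∀ u : V, u = v ∨ u ∈ c.support) ∧
    (∀ u w : V, u ∈ c.support → w ∈ c.support → G.Adj u w → s(u, w) ∈ c.edges) ∧
    3 ≤ {u : V | u ∈ c.support ∧ G.Adj v u}.ncard ∧
    ¬ (G.induce {u : V | u ∈ c.support ∧ G.Adj v u}).Connected

/-- `G` is diamond-free: it has no induced subgraph isomorphic to `K₄` minus an edge. -/
def DiamondFree (G : SimpleGraph V) : Prop :=
  ¬ ∃ a b c d : V, c ≠ d ∧ G.Adj a b ∧ G.Adj a c ∧ G.Adj a d ∧ G.Adj b c ∧ G.Adj b d ∧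
    ¬ G.Adj c d

/-- The short `n`-prism: two `n`-vertex cliques joined by a perfect matching. -/
def completePrism (n : ℕ) : SimpleGraph (Fin n ⊕ Fin n) :=
  SimpleGraph.fromRel (fun x y =>
    match x, y with
    | Sum.inl _, Sum.inl _ => True
    | Sum.inr _, Sum.inr _ => True
    | Sum.inl i, Sum.inr j => i = j
    | Sum.inr i, Sum.inl j => i = j)

/-- `G` is a complete prism, i.e. a short `n`-prism for some `n ≥ 3`. -/
def IsCompletePrism (G : SimpleGraph V) : Prop :=
  ∃ n : ℕ, 3 ≤ n ∧ Nonempty (G ≃g completePrism n)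

/-- `G` is a cycle. -/
def IsCycleGraph (G : SimpleGraph V) : Prop :=
  ∃ n : ℕ, 3 ≤ n ∧ Nonempty (G ≃g cycleGraph n)

/-- `G` is a complete graph. -/
def IsCompleteGraph (G : SimpleGraph V) : Prop :=
  ∀ u v : V, u ≠ v → G.Adj u v

/-- `G` has a clique-cutset. -/
def HasCliqueCutset (G : SimpleGraph V) : Prop :=
  ∃ K : Set V, G.IsClique K ∧ IsCutset G K



/-!
Let `S` be a minimal `(a, b)`-separator of `G`. If `S ⊆ K`, it is a clique. Otherwise `S` meets,
say, `A`. Since `K` is a clique, the components of `a` and of `b` in `G - S` cannot both meet `K`;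
if the component of `b` misses `K`, it lies in `A`, and as every vertex of `S` has a neighbour in
it, `S ⊆ A ∪ K`. For a vertex `s ∈ S ∩ A` with neighbours `x`, `y` in the two components, `S` is
then a minimal `(x, y)`-separator of `G[A ∪ K]`: a walk of `G` that leaves `A ∪ K` does so and
returns through the clique `K`, so the excursion can be replaced by one edge of `K`.
-/

variable {G : SimpleGraph V} {S T : Set V} {a b c : V}

namespace ConnAvoid

lemma refl (ha : a ∉ S) : ConnAvoid G S a a :=
  ⟨Walk.nil, fun v hv => by rwa [List.mem_singleton.mp hv]⟩

lemma notMem_right (h : ConnAvoid G S a b) : b ∉ S := by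
  obtain ⟨p, hp⟩ := h
  exact hp b p.end_mem_support

lemma symm (h : ConnAvoid G S a b) : ConnAvoid G S b a := by
  obtain ⟨p, hp⟩ := h
  exact ⟨p.reverse, fun v hv => hp v (by simpa using hv)⟩

lemma trans (h : ConnAvoid G S a b) (h' : ConnAvoid G S b c) : ConnAvoid G S a c := by
  obtain ⟨p, hp⟩ := h
  obtain ⟨q, hq⟩ := h'
  exact ⟨p.append q, fun v hv => (Walk.mem_support_append_iff p q).mp hv |>.elim (hp v) (hq v)⟩

lemma cons (hab : G.Adj a b) (ha : a ∉ S) (h : ConnAvoid G S b c) : ConnAvoid G S a c := by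
  obtain ⟨p, hp⟩ := h
  refine ⟨Walk.cons hab p, fun v hv => ?_⟩
  rcases List.mem_cons.mp (Walk.support_cons hab p ▸ hv) with rfl | hv
  exacts [ha, hp v hv]

lemma mono (hTS : T ⊆ S) (h : ConnAvoid G S a b) : ConnAvoid G T a b := by
  obtain ⟨p, hp⟩ := h
  exact ⟨p, fun v hv hvT => hp v hv (hTS hvT)⟩

lemma map {W : Type} {H : SimpleGraph W} (f : H →g G) {u v : W}
    (h : ConnAvoid H (f ⁻¹' S) u v) : ConnAvoid G S (f u) (f v) := by
  obtain ⟨p, hp⟩ := h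
  refine ⟨p.map f, fun w hw => ?_⟩
  obtain ⟨x, hx, rfl⟩ := List.mem_map.mp (Walk.support_map f p ▸ hw)
  exact hp x hx

end ConnAvoid

lemma IsSep.symm (h : IsSep G a b S) : IsSep G b a S :=
  ⟨h.2.1, h.1, fun hc => h.2.2 hc.symm⟩

lemma IsMinSep.symm (h : IsMinSep G a b S) : IsMinSep G b a S :=
  ⟨h.1.symm, fun T hT hsep => h.2 T hT hsep.symm⟩

lemma IsSep.ne (h : IsSep G a b S) : a ≠ b := by
  rintro rfl
  exact h.2.2 (ConnAvoid.refl h.1)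

lemma IsSep.not_adj (h : IsSep G a b S) : ¬ G.Adj a b := fun hab =>
  h.2.2 (ConnAvoid.cons hab h.1 (ConnAvoid.refl h.2.1))

lemma IsMinSep.isMinimalSeparator (h : IsMinSep G a b S) : IsMinimalSeparator G S :=
  ⟨a, b, h.1.ne, h.1.not_adj, h⟩

lemma exists_adj_connAvoid_of_walk :
    ∀ {u v : V} (p : G.Walk u v), u ∉ S → v ∈ S →
      ∃ s ∈ p.support, s ∈ S ∧ ∃ w, G.Adj s w ∧ ConnAvoid G S u w
  | _, _, .nil, hu, hv => absurd hv hu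
  | u, _, .cons (v := w) huw q, hu, hv => by
    by_cases hw : w ∈ S
    · exact ⟨w, by simp, hw, u, huw.symm, ConnAvoid.refl hu⟩
    · obtain ⟨s, hs, hsS, z, hsz, hwz⟩ := exists_adj_connAvoid_of_walk q hw hv
      exact ⟨s, by simp [hs], hsS, z, hsz, ConnAvoid.cons huw hu hwz⟩

lemma IsMinSep.exists_adj_connAvoid (hmin : IsMinSep G a b S) {s : V} (hs : s ∈ S) :
    ∃ u, G.Adj s u ∧ ConnAvoid G S a u := by
  classical
  have hconn : ConnAvoid G (S \ {s}) a b := by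
    by_contra h
    exact hmin.2 _ (Set.sdiff_singleton_ssubset.2 hs)
      ⟨fun h => hmin.1.1 h.1, fun h => hmin.1.2.1 h.1, h⟩
  obtain ⟨p, hp⟩ := hconn
  have hsp : s ∈ p.support := by
    by_contra hsp
    exact hmin.1.2.2 ⟨p, fun v hv hvS => hp v hv ⟨hvS, fun hvs => hsp (hvs ▸ hv)⟩⟩
  obtain ⟨t, ht, htS, u, htu, hu⟩ :=
    exists_adj_connAvoid_of_walk (p.takeUntil s hsp) hmin.1.1 hs
  obtain rfl : t = s := by
    by_contra hts
    exact hp t (p.support_takeUntil_subset_support hsp ht) ⟨htS, hts⟩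
  exact ⟨u, htu, hu⟩

lemma _root_.SimpleGraph.IsClique.forall_not_connAvoid_or {K : Set V} (hK : G.IsClique K)
    (hab : ¬ ConnAvoid G S a b) :
    (∀ v ∈ K, ¬ ConnAvoid G S a v) ∨ (∀ v ∈ K, ¬ ConnAvoid G S b v) := by
  by_contra! ⟨⟨u, hu, hau⟩, ⟨v, hv, hbv⟩⟩
  obtain rfl | huv := eq_or_ne u v
  · exact hab (hau.trans hbv.symm)
  · exact hab (hau.trans (ConnAvoid.cons (hK hu hv huv) hau.notMem_right hbv.symm))

lemma UnionOfCliques.of_induce {s : Set V} {k : ℕ} (hS : S ⊆ s)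
    (h : UnionOfCliques (G.induce s) k (Subtype.val ⁻¹' S)) : UnionOfCliques G k S := by
  obtain ⟨f, hf, hSf⟩ := h
  refine ⟨fun i => Subtype.val '' f i, fun i => ?_, ?_⟩
  · rintro _ ⟨u, hu, rfl⟩ _ ⟨v, hv, rfl⟩ huv
    exact hf i hu hv (ne_of_apply_ne Subtype.val huv)
  · rw [← Set.image_iUnion, ← hSf, Set.image_preimage_eq_of_subset (by simpa using hS)]

section Block

variable {A K : Set V}

lemma mem_of_connAvoid (hA : ∀ u ∈ A, ∀ w, G.Adj u w → w ∈ A ∪ K)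
    (haK : ∀ w ∈ K, ¬ ConnAvoid G S a w) (ha : a ∈ A) (h : ConnAvoid G S a b) : b ∈ A := by
  obtain ⟨p, hp⟩ := h
  induction p with
  | nil => exact ha
  | @cons u w v huw q ih =>
    have hw : ConnAvoid G S u w :=
      ConnAvoid.cons huw (hp u (by simp)) (ConnAvoid.refl (hp w (by simp)))
    refine ih (fun z hz hwz => haK z hz (hw.trans hwz)) ?_ (fun x hx => hp x (by simp [hx]))
    exact (hA u ha w huw).resolve_right (fun hwK => haK w hwK hw)

/-- The second conjunct is the invariant while the walk is outside `A ∪ K`: it can only return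
through `K`, and every vertex of the clique `K` is adjacent to the re-entry point. -/
lemma connAvoid_induce_of_walk (hA : ∀ u ∈ A, ∀ w, G.Adj u w → w ∈ A ∪ K) (hK : G.IsClique K)
    {u v : V} (p : G.Walk u v) (hp : ∀ w ∈ p.support, w ∉ T)
    (hv : v ∈ A ∪ K) :
    (∀ hu : u ∈ A ∪ K,
      ConnAvoid (G.induce (A ∪ K)) (Subtype.val ⁻¹' T) ⟨u, hu⟩ ⟨v, hv⟩) ∧
    (u ∉ A ∪ K → ∀ (c : V) (hc : c ∈ K), c ∉ T →
      ConnAvoid (G.induce (A ∪ K)) (Subtype.val ⁻¹' T) ⟨c, Or.inr hc⟩ ⟨v, hv⟩) := by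
  induction p with
  | nil => exact ⟨fun _ => ConnAvoid.refl (hp _ (by simp)), fun hu => absurd hv hu⟩
  | @cons u w v huw q ih =>
    obtain ⟨ih₁, ih₂⟩ := ih (fun x hx => hp x (by simp [hx])) hv
    have hu : u ∉ T := hp u (by simp)
    refine ⟨fun huAK => ?_, fun huAK c hc hcT => ?_⟩
    · by_cases hwAK : w ∈ A ∪ K
      · exact ConnAvoid.cons (G := G.induce (A ∪ K)) (b := ⟨w, hwAK⟩) huw hu (ih₁ hwAK)
      · have huK : u ∈ K := huAK.resolve_left fun huA => hwAK (hA u huA w huw)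
        exact ih₂ hwAK u huK hu
    · by_cases hwAK : w ∈ A ∪ K
      · have hwK : w ∈ K := hwAK.resolve_left fun hwA => huAK (hA w hwA u huw.symm)
        obtain rfl | hcw := eq_or_ne c w
        · exact ih₁ hwAK
        · exact ConnAvoid.cons (G := G.induce (A ∪ K)) (b := ⟨w, hwAK⟩) (hK hc hwK hcw) hcT
            (ih₁ hwAK)
      · exact ih₂ hwAK c hc hcT

lemma connAvoid_induce (hA : ∀ u ∈ A, ∀ w, G.Adj u w → w ∈ A ∪ K) (hK : G.IsClique K)
    {u v : V} (hu : u ∈ A ∪ K) (hv : v ∈ A ∪ K) (h : ConnAvoid G T u v) :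
    ConnAvoid (G.induce (A ∪ K)) (Subtype.val ⁻¹' T) ⟨u, hu⟩ ⟨v, hv⟩ := by
  obtain ⟨p, hp⟩ := h
  exact (connAvoid_induce_of_walk hA hK p hp hv).1 hu

lemma isMinSep_induce (hA : ∀ u ∈ A, ∀ w, G.Adj u w → w ∈ A ∪ K) (hK : G.IsClique K)
    (hmin : IsMinSep G a b S) (hS : S ⊆ A ∪ K) {x y : V} (hx : x ∈ A ∪ K) (hy : y ∈ A ∪ K)
    (hax : ConnAvoid G S a x) (hby : ConnAvoid G S b y) :
    IsMinSep (G.induce (A ∪ K)) ⟨x, hx⟩ ⟨y, hy⟩ (Subtype.val ⁻¹' S) := by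
  refine ⟨⟨hax.notMem_right, hby.notMem_right, fun hxy => ?_⟩, fun T hT hTsep => ?_⟩
  · exact hmin.1.2.2 (hax.trans ((hxy.map (Embedding.induce _).toHom).trans hby.symm))
  · have hTS : Subtype.val '' T ⊂ S := by
      simpa [Subtype.image_preimage_coe, Set.inter_eq_right.mpr hS]
        using Subtype.val_injective.image_strictMono hT
    have hab : ConnAvoid G (Subtype.val '' T) a b := by
      by_contra hab
      exact hmin.2 _ hTS ⟨fun ha => hmin.1.1 (hTS.1 ha), fun hb => hmin.1.2.1 (hTS.1 hb), hab⟩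
    have hxy := connAvoid_induce hA hK hx hy
      (((hax.mono hTS.1).symm.trans hab).trans (hby.mono hTS.1))
    rw [Subtype.val_injective.preimage_image] at hxy
    exact hTsep.2.2 hxy

lemma unionOfCliques_of_isMinSep (hA : ∀ u ∈ A, ∀ w, G.Adj u w → w ∈ A ∪ K)
    (hK : G.IsClique K) {k : ℕ} (hGA : MemGk k (G.induce (A ∪ K))) (hmin : IsMinSep G a b S)
    {s : V} (hs : s ∈ S) (hsA : s ∈ A) : UnionOfCliques G k S := by
  wlog hb : ∀ v ∈ K, ¬ ConnAvoid G S b v generalizing a b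
  · exact this hmin.symm ((hK.forall_not_connAvoid_or hmin.1.2.2).resolve_right hb)
  obtain ⟨y, hsy, hby⟩ := hmin.symm.exists_adj_connAvoid hs
  have hyA : y ∈ A := (hA s hsA y hsy).resolve_right fun hyK => hb y hyK hby
  have hbA : ∀ v, ConnAvoid G S b v → v ∈ A := fun v hv =>
    mem_of_connAvoid hA (fun w hw hyw => hb w hw (hby.trans hyw)) hyA (hby.symm.trans hv)
  have hS : S ⊆ A ∪ K := fun t ht => by
    obtain ⟨u, htu, hbu⟩ := hmin.symm.exists_adj_connAvoid ht
    exact hA u (hbA u hbu) t htu.symm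
  obtain ⟨x, hsx, hax⟩ := hmin.exists_adj_connAvoid hs
  exact .of_induce hS (hGA _ (isMinSep_induce hA hK hmin hS (hA s hsA x hsx) (Or.inl hyA)
    hax hby).isMinimalSeparator)

end Block

lemma UnionOfCliques.of_isClique {k : ℕ} (hk : 1 ≤ k) (hS : G.IsClique S) :
    UnionOfCliques G k S :=
  have : Nonempty (Fin k) := ⟨⟨0, hk⟩⟩
  ⟨fun _ => S, fun _ => hS, (Set.iUnion_const S).symm⟩

theorem statement_3_general (k : ℕ) (hk : 1 ≤ k)
    (V : Type) (G : SimpleGraph V) (A B K : Set V)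
    (hcover : A ∪ B ∪ K = Set.univ)
    (hanti : ∀ a ∈ A, ∀ b ∈ B, ¬ G.Adj a b)
    (hclique : G.IsClique K)
    (hGA : MemGk k (G.induce (A ∪ K))) (hGB : MemGk k (G.induce (B ∪ K))) :
    MemGk k G := by
  rintro S ⟨a, b, -, -, hmin⟩
  by_cases hSK : S ⊆ K
  · exact .of_isClique hk (hclique.subset hSK)
  obtain ⟨s, hs, hsK⟩ := Set.not_subset.mp hSK
  have hmem : ∀ v, v ∈ A ∪ B ∪ K := fun v => hcover ▸ Set.mem_univ v
  rcases (hmem s).resolve_right hsK with hsA | hsB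
  · refine unionOfCliques_of_isMinSep (fun u hu w huw => ?_) hclique hGA hmin hs hsA
    rcases hmem w with (hw | hw) | hw
    exacts [.inl hw, absurd huw (hanti u hu w hw), .inr hw]
  · refine unionOfCliques_of_isMinSep (fun u hu w huw => ?_) hclique hGB hmin hs hsB
    rcases hmem w with (hw | hw) | hw
    exacts [absurd huw.symm (hanti w hw u hu), .inl hw, .inr hw]

/-- for every positive integer `k`, the class `𝒢_k` is closed under gluing
along a clique: if `(A, B, K)` is a cut-partition of `G` with `K` a clique, and both
`G[A ∪ K]` and `G[B ∪ K]` belong to `𝒢_k`, then `G` belongs to `𝒢_k`. -/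
theorem statement_3 (k : ℕ) (hk : 1 ≤ k)
    (V : Type) [Finite V] (G : SimpleGraph V) (A B K : Set V)
    (hA : A.Nonempty) (hB : B.Nonempty)
    (hAB : Disjoint A B) (hAK : Disjoint A K) (hBK : Disjoint B K)
    (hcover : A ∪ B ∪ K = Set.univ)
    (hanti : ∀ a ∈ A, ∀ b ∈ B, ¬ G.Adj a b)
    (hclique : G.IsClique K)
    (hGA : MemGk k (G.induce (A ∪ K))) (hGB : MemGk k (G.induce (B ∪ K))) :
    MemGk k G :=
  statement_3_general k hk V G A B K hcover hanti hclique hGA hGB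

end PaperSep
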